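/- arXiv:1709.09286 — 3 statements merged into one kernel-verified Lean document; each statement's English description precedes it below -/
import Mathlib

section
/- For every positive integer n and every 0 ≤ d ≤ n, the set of d×d minors of an n×n matrix of independent indeterminates (i.e., the determinants of the submatrices obtained by choosing d rows and d columns) is linearly independent over the base field, and hence there are exactly (n choose d)^2 of them spanning a space of that dimension. -/
/-- The `d × d` minor of the generic `n × n` matrix of indeterminates determined by
row set `I` and column set `J` (each of cardinality `d`). -/
noncomputable def genericMinor (k : Type*) [Field k] (n d : ℕ) (I J : Finset (Fin n))
    (hI : I.card = d) (hJ : J.card = d) : MvPolynomial (Fin n × Fin n) k :=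
  Matrix.det (Matrix.of fun a b : Fin d =>
    (MvPolynomial.X ((I.orderIsoOfFin hI a : Fin n), (J.orderIsoOfFin hJ b : Fin n)) :
      MvPolynomial (Fin n × Fin n) k))

/-!
The `I × J` minor of the partial permutation matrix matching `I` with `J` in increasing order
is `1`, while any other `d × d` minor of it has a zero row (a row outside `I`) or a zero column
(a column outside `J`). So evaluation at these matrices is a family of linear functionals dual
to the minors.
-/

open MvPolynomial Finset

theorem Finset.exists_mem_notMem_of_card_eq {α : Type*} {s t : Finset α} (hst : s ≠ t)
    (h : #s = #t) : ∃ x ∈ s, x ∉ t := by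
  by_contra! hsub
  exact hst (eq_of_subset_of_card_le hsub h.ge)

section PartialPermutation

variable (R : Type*) [CommRing R] {n d : ℕ} (I J : Finset (Fin n)) (hI : #I = d) (hJ : #J = d)

noncomputable def partialPermMatrix : Fin n × Fin n → R := fun x =>
  if ∃ a, ((I.orderIsoOfFin hI a : Fin n), (J.orderIsoOfFin hJ a : Fin n)) = x then 1 else 0

theorem partialPermMatrix_orderIsoOfFin (a b : Fin d) :
    partialPermMatrix R I J hI hJ
        ((I.orderIsoOfFin hI a : Fin n), (J.orderIsoOfFin hJ b : Fin n)) =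
      if a = b then 1 else 0 := by
  simp [partialPermMatrix, eq_comm]

variable {I J}

theorem partialPermMatrix_eq_zero_of_fst_notMem {i : Fin n} (hi : i ∉ I) (j : Fin n) :
    partialPermMatrix R I J hI hJ (i, j) = 0 := by
  simp only [partialPermMatrix, Prod.mk.injEq, ite_eq_right_iff]
  rintro ⟨a, rfl, -⟩
  exact absurd (I.orderIsoOfFin hI a).2 hi

theorem partialPermMatrix_eq_zero_of_snd_notMem (i : Fin n) {j : Fin n} (hj : j ∉ J) :
    partialPermMatrix R I J hI hJ (i, j) = 0 := by
  simp only [partialPermMatrix, Prod.mk.injEq, ite_eq_right_iff]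
  rintro ⟨a, -, rfl⟩
  exact absurd (J.orderIsoOfFin hJ a).2 hj

theorem det_partialPermMatrix_submatrix {I' J' : Finset (Fin n)} (hI' : #I' = d)
    (hJ' : #J' = d) :
    (Matrix.of fun a b : Fin d => partialPermMatrix R I J hI hJ
        ((I'.orderIsoOfFin hI' a : Fin n), (J'.orderIsoOfFin hJ' b : Fin n))).det =
      if I = I' ∧ J = J' then 1 else 0 := by
  by_cases hII : I' = I
  · by_cases hJJ : J' = J
    · subst hII hJJ
      rw [if_pos ⟨rfl, rfl⟩, ← Matrix.det_one (n := Fin d) (R := R)]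
      congr 1
      ext a b
      rw [Matrix.one_apply]
      exact partialPermMatrix_orderIsoOfFin R I' J' _ _ a b
    · rw [if_neg fun h => hJJ h.2.symm]
      obtain ⟨j, hj, hj'⟩ := exists_mem_notMem_of_card_eq hJJ (hJ'.trans hJ.symm)
      refine Matrix.det_eq_zero_of_column_eq_zero ((J'.orderIsoOfFin hJ').symm ⟨j, hj⟩) fun a => ?_
      simp only [Matrix.of_apply, OrderIso.apply_symm_apply]
      exact partialPermMatrix_eq_zero_of_snd_notMem R hI hJ _ hj'
  · rw [if_neg fun h => hII h.1.symm]
    obtain ⟨i, hi, hi'⟩ := exists_mem_notMem_of_card_eq hII (hI'.trans hI.symm)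
    refine Matrix.det_eq_zero_of_row_eq_zero ((I'.orderIsoOfFin hI').symm ⟨i, hi⟩) fun b => ?_
    simp only [Matrix.of_apply, OrderIso.apply_symm_apply]
    exact partialPermMatrix_eq_zero_of_fst_notMem R hI hJ hi' _

end PartialPermutation

theorem aeval_genericMinor {k A : Type*} [Field k] [CommRing A] [Algebra k A] {n d : ℕ}
    (x : Fin n × Fin n → A) {I J : Finset (Fin n)} (hI : #I = d) (hJ : #J = d) :
    aeval x (genericMinor k n d I J hI hJ) =
      (Matrix.of fun a b : Fin d =>
        x ((I.orderIsoOfFin hI a : Fin n), (J.orderIsoOfFin hJ b : Fin n))).det := by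
  rw [genericMinor, AlgHom.map_det]
  congr 1
  ext a b
  simp

theorem LinearIndependent.of_apply_eq_ite {R M ι : Type*} [Semiring R] [AddCommMonoid M]
    [Module R M] [DecidableEq ι] {v : ι → M} (f : ι → M →ₗ[R] R)
    (hf : ∀ i j, f i (v j) = if i = j then 1 else 0) : LinearIndependent R v := by
  have hfv : LinearMap.pi f ∘ v = fun j => Pi.single j 1 := by
    ext j i
    simp [hf, Pi.single_apply]
  exact LinearIndependent.of_comp (LinearMap.pi f) (hfv ▸ Pi.linearIndependent_single_one ι R)

theorem minors_linearIndependent_general (k : Type*) [Field k] (n d : ℕ) :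
    LinearIndependent k
      (fun p : {p : Finset (Fin n) × Finset (Fin n) // p.1.card = d ∧ p.2.card = d} =>
        genericMinor k n d p.1.1 p.1.2 p.2.1 p.2.2) ∧
    Fintype.card {p : Finset (Fin n) × Finset (Fin n) // p.1.card = d ∧ p.2.card = d} =
      (n.choose d) ^ 2 := by
  constructor
  · refine LinearIndependent.of_apply_eq_ite
      (fun q => (aeval (partialPermMatrix k q.1.1 q.1.2 q.2.1 q.2.2)).toLinearMap) fun q p => ?_
    simp only [AlgHom.toLinearMap_apply, aeval_genericMinor,
      det_partialPermMatrix_submatrix, Subtype.ext_iff, Prod.ext_iff]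
  · rw [Fintype.card_congr (Equiv.subtypeProdEquivProd (p := (#· = d)) (q := (#· = d))),
      Fintype.card_prod, Fintype.card_finset_len, Fintype.card_fin, sq]

theorem minors_linearIndependent (k : Type*) [Field k] (n d : ℕ) (hn : 0 < n) (hd : d ≤ n) :
    LinearIndependent k
      (fun p : {p : Finset (Fin n) × Finset (Fin n) // p.1.card = d ∧ p.2.card = d} =>
        genericMinor k n d p.1.1 p.1.2 p.2.1 p.2.2) ∧
    Fintype.card {p : Finset (Fin n) × Finset (Fin n) // p.1.card = d ∧ p.2.card = d} =
      (n.choose d) ^ 2 :=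
  minors_linearIndependent_general k n d
end

section
/- Let G be a finite connected graph with vertex set V and edge set E, and let T be a spanning tree of G. Then the k-vector space of zero-magic edge-labelings of G (labelings ℓ : E → k such that at every vertex the sum of labels of incident edges is zero) has dimension at most |E| − |E(T)| = |E| − |V| + 1 whenever G is bipartite, because a zero-magic labeling vanishing on all edges outside T must be identically zero. -/
/-!
Every edge `uv` of a forest `T` is a bridge. Let `S` be the component of `u` in `T - uv` and let
`σ : V → {±1}` be a proper 2-colouring of `T`, which exists because forests are bipartite.
Adding up the zero-magic conditions at the vertices of `S`, each weighted by `σ`, cancels every edge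
with both ends in `S` (its label gets the coefficient `σ a + σ b = 0`) and leaves `σ u · ℓ(uv) = 0`.
Hence a zero-magic labeling supported on a spanning tree vanishes, and restricting labelings to the
edges outside the tree is injective.
-/

open Finset

/-- The space of zero-magic `k`-edge-labelings of a finite graph `G`: functions on
`Sym2 V` supported on the edges of `G` such that at every vertex the sum of the labels of
the incident edges is zero. -/
def zeroMagicLabelings (k : Type*) [Field k] {V : Type*} [Fintype V] [DecidableEq V]
    (G : SimpleGraph V) [DecidableRel G.Adj] : Submodule k (Sym2 V → k) where
  carrier := {ℓ | (∀ e, e ∉ G.edgeSet → ℓ e = 0) ∧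
    ∀ v, ∑ e ∈ G.incidenceFinset v, ℓ e = 0}
  add_mem' := by
    intro a b ha hb
    refine ⟨fun e he => ?_, fun v => ?_⟩
    · simp [Pi.add_apply, ha.1 e he, hb.1 e he]
    · simp [Pi.add_apply, Finset.sum_add_distrib, ha.2 v, hb.2 v]
  zero_mem' := by
    refine ⟨fun e _ => rfl, fun v => ?_⟩
    simp
  smul_mem' := by
    intro c a ha
    refine ⟨fun e he => ?_, fun v => ?_⟩
    · simp [ha.1 e he]
    · simp [smul_eq_mul, ← Finset.mul_sum, ha.2 v]

open SimpleGraph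

namespace Sym2

theorem sum_filter_mem_mk {V R : Type*} [Fintype V] [DecidableEq V] [AddCommMonoid R]
    {a b : V} (hab : a ≠ b) (f : V → R) : ∑ v with v ∈ s(a, b), f v = f a + f b := by
  have hfilter : ({v | v ∈ s(a, b)} : Finset V) = {a, b} := by
    ext v
    simp [Sym2.mem_iff]
  rw [hfilter, sum_pair hab]

end Sym2

namespace SimpleGraph

theorem Colorable.exists_sign {V : Type*} {G : SimpleGraph V} (hG : G.Colorable 2)
    (R : Type*) [Ring R] [Nontrivial R] :
    ∃ σ : V → R, (∀ v, σ v ≠ 0) ∧ ∀ a b, G.Adj a b → σ a + σ b = 0 := by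
  obtain ⟨C⟩ := hG
  refine ⟨fun v => (-1) ^ (C v : ℕ), fun v => ((isUnit_neg_one).pow _).ne_zero,
    fun a b hab => ?_⟩
  have hne := C.valid hab
  show (-1 : R) ^ (C a : ℕ) + (-1) ^ (C b : ℕ) = 0
  generalize C a = i, C b = j at hne ⊢
  fin_cases i <;> fin_cases j <;> simp_all

variable {V : Type*} [Fintype V] [DecidableEq V]

theorem sum_mul_sum_incidenceFinset (G : SimpleGraph V) [DecidableRel G.Adj] {R : Type*}
    [CommSemiring R] (f : V → R) (ℓ : Sym2 V → R) :
    ∑ v, f v * ∑ e ∈ G.incidenceFinset v, ℓ e =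
      ∑ e ∈ G.edgeFinset, (∑ v with v ∈ e, f v) * ℓ e := by
  simp_rw [incidenceFinset_eq_filter, sum_filter, mul_sum, sum_mul]
  rw [sum_comm]
  refine sum_congr rfl fun e _ => sum_congr rfl fun v _ => ?_
  split_ifs <;> simp

end SimpleGraph

section ZeroMagic

variable {V : Type*} [Fintype V] [DecidableEq V] {k : Type*} [Field k]

theorem mem_zeroMagicLabelings_of_le {G T : SimpleGraph V} [DecidableRel G.Adj]
    [DecidableRel T.Adj] (hTG : T ≤ G) {ℓ : Sym2 V → k} (hℓ : ℓ ∈ zeroMagicLabelings k G)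
    (hoff : ∀ e ∈ G.edgeSet \ T.edgeSet, ℓ e = 0) : ℓ ∈ zeroMagicLabelings k T := by
  have hsupp : ∀ e, e ∉ T.edgeSet → ℓ e = 0 := fun e heT =>
    (em (e ∈ G.edgeSet)).elim (fun heG => hoff e ⟨heG, heT⟩) (hℓ.1 e)
  refine ⟨hsupp, fun v => ?_⟩
  have hsub : T.incidenceFinset v ⊆ G.incidenceFinset v := fun e he => by
    simp only [mem_incidenceFinset, incidenceSet, Set.mem_ofPred_eq] at he ⊢
    exact ⟨edgeSet_mono hTG he.1, he.2⟩
  rw [sum_subset hsub fun e heG heT => hsupp e fun he =>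
    heT <| (T.mem_incidenceFinset v e).2 ⟨he, ((G.mem_incidenceFinset v e).1 heG).2⟩]
  exact hℓ.2 v

theorem zeroMagicLabelings_apply_eq_zero_of_isBridge {T : SimpleGraph V} [DecidableRel T.Adj]
    (hT : T.Colorable 2) {ℓ : Sym2 V → k} (hℓ : ℓ ∈ zeroMagicLabelings k T) {u v : V}
    (hbr : T.IsBridge s(u, v)) : ℓ s(u, v) = 0 := by
  obtain ⟨σ, hσ0, hσadj⟩ := hT.exists_sign k
  set H := T.deleteEdges {s(u, v)}
  let f : V → k := fun w => if H.Reachable u w then σ w else 0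
  have huv : u ≠ v := by
    rintro rfl
    exact isBridge_iff.mp hbr .rfl
  have hf : ∀ a b, T.Adj a b → s(a, b) ≠ s(u, v) → f a + f b = 0 := by
    intro a b hab hne
    have hadj : H.Adj a b := deleteEdges_adj.mpr ⟨hab, hne⟩
    by_cases ha : H.Reachable u a
    · simp [f, ha, ha.trans hadj.reachable, hσadj a b hab]
    · have hb : ¬H.Reachable u b := fun hb => ha (hb.trans hadj.symm.reachable)
      simp [f, ha, hb]
  have hcut : (∑ w with w ∈ s(u, v), f w) * ℓ s(u, v) = 0 := calc
    _ = ∑ e ∈ T.edgeFinset, (∑ w with w ∈ e, f w) * ℓ e := by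
      symm
      refine sum_eq_single _ (fun e he hne => ?_) fun he => ?_
      swap
      · rw [hℓ.1 _ (by simpa using he), mul_zero]
      induction e using Sym2.ind with
      | _ a b =>
        have hab : T.Adj a b := by simpa using he
        rw [Sym2.sum_filter_mem_mk hab.ne, hf a b hab hne, zero_mul]
    _ = ∑ w, f w * ∑ e ∈ T.incidenceFinset w, ℓ e := (sum_mul_sum_incidenceFinset T f ℓ).symm
    _ = 0 := by simp [hℓ.2]
  have hfv : f v = 0 := if_neg (isBridge_iff.mp hbr)
  rw [Sym2.sum_filter_mem_mk huv, hfv, add_zero, show f u = σ u from if_pos .rfl] at hcut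
  exact (mul_eq_zero.mp hcut).resolve_left (hσ0 u)

theorem zeroMagicLabelings_eq_bot_of_isAcyclic {T : SimpleGraph V} [DecidableRel T.Adj]
    (hT : T.IsAcyclic) : zeroMagicLabelings k T = ⊥ := by
  refine (Submodule.eq_bot_iff _).mpr fun ℓ hℓ => funext fun e => ?_
  induction e using Sym2.ind with
  | _ u v =>
    by_cases huv : T.Adj u v
    · exact zeroMagicLabelings_apply_eq_zero_of_isBridge hT.colorable_two hℓ
        (isAcyclic_iff_forall_adj_isBridge.mp hT huv)
    · exact hℓ.1 _ huv

end ZeroMagic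

theorem Submodule.finrank_le_card_of_eqOn_zero {k α : Type*} [Field k]
    {W : Submodule k (α → k)} (D : Finset α) (hW : ∀ ℓ ∈ W, Set.EqOn ℓ 0 D → ℓ = 0) :
    Module.finrank k W ≤ #D := by
  let restrict : W →ₗ[k] (D → k) := (LinearMap.funLeft k k ((↑) : D → α)).comp W.subtype
  have hinj : Function.Injective restrict := by
    rw [← LinearMap.ker_eq_bot, LinearMap.ker_eq_bot']
    exact fun ℓ hℓ => Subtype.ext <| hW ℓ ℓ.2 fun e he => congrFun hℓ ⟨e, he⟩
  simpa using LinearMap.finrank_le_finrank_of_injective hinj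

theorem zeroMagic_dimension_bound_general (k : Type*) [Field k] {V : Type*} [Fintype V]
    [DecidableEq V] (G : SimpleGraph V) [DecidableRel G.Adj]
    (T : SimpleGraph V) [DecidableRel T.Adj] (hTG : T ≤ G) (hT : T.IsTree) :
    (∀ ℓ ∈ zeroMagicLabelings k G,
        (∀ e ∈ G.edgeSet \ T.edgeSet, ℓ e = 0) → ℓ = 0) ∧
      Module.finrank k (zeroMagicLabelings k G) ≤
        G.edgeFinset.card - Fintype.card V + 1 := by
  have hvanish : ∀ ℓ ∈ zeroMagicLabelings k G,
      (∀ e ∈ G.edgeSet \ T.edgeSet, ℓ e = 0) → ℓ = 0 := fun ℓ hℓ hoff => by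
    simpa [zeroMagicLabelings_eq_bot_of_isAcyclic hT.isAcyclic] using
      mem_zeroMagicLabelings_of_le hTG hℓ hoff
  refine ⟨hvanish, ?_⟩
  have hsub : T.edgeFinset ⊆ G.edgeFinset := edgeFinset_mono hTG
  calc Module.finrank k (zeroMagicLabelings k G)
      ≤ #(G.edgeFinset \ T.edgeFinset) :=
        Submodule.finrank_le_card_of_eqOn_zero _ fun ℓ hℓ hD =>
          hvanish ℓ hℓ fun e he => hD (by simpa using he)
    _ = #G.edgeFinset - #T.edgeFinset := card_sdiff_of_subset hsub
    _ ≤ #G.edgeFinset - Fintype.card V + 1 := by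
      have := hT.card_edgeFinset
      have := card_le_card hsub
      omega

/-- For a connected bipartite finite graph `G` with a spanning tree `T`:
a zero-magic labeling vanishing on all edges outside `T` is identically zero, and hence
the space of zero-magic labelings has dimension at most `|E| - |V| + 1`. -/
theorem zeroMagic_dimension_bound (k : Type*) [Field k] {V : Type*} [Fintype V]
    [DecidableEq V] (G : SimpleGraph V) [DecidableRel G.Adj]
    (hconn : G.Connected) (hbip : G.Colorable 2)
    (T : SimpleGraph V) [DecidableRel T.Adj] (hTG : T ≤ G) (hT : T.IsTree) :
    (∀ ℓ ∈ zeroMagicLabelings k G,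
        (∀ e ∈ G.edgeSet \ T.edgeSet, ℓ e = 0) → ℓ = 0) ∧
      Module.finrank k (zeroMagicLabelings k G) ≤
        G.edgeFinset.card - Fintype.card V + 1 :=
  zeroMagic_dimension_bound_general k G T hTG hT
end

section
/- Let H_S(d) = C(n² + d − 1, d) be the Hilbert function of a polynomial ring in n² variables and let β_{0,0} = 1, β_{1,2} = C(n+1,2)², β_{2,3} = 4·C(n+1,3)·C(n+2,3). Then the unique value β_{3,4} solving C(n,4)² = β_{0,0}·H_S(4) − β_{1,2}·H_S(2) + β_{2,3}·H_S(1) − β_{3,4}·H_S(0) is β_{3,4} = 6·C(n+1,4)·C(n+3,4) + 9·C(n+2,4)², equivalently (1/192)·(n−1)·n²·(n+1)²·(n+2)·(5n²+5n−18). -/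
/-! Writing each binomial coefficient `C(m, k)` as the polynomial `m(m-1)⋯(m-k+1)/k!` turns both
claims into polynomial identities in `n` over `ℚ`; since `H_S(0) = 1`, the Hilbert-function
equation is linear in `β_{3,4}` with coefficient `1`, so it pins `β_{3,4}` down uniquely. -/

namespace Nat

variable {K : Type*} [Field K] [CharZero K]

theorem cast_choose_three (a : ℕ) : (a.choose 3 : K) = a * (a - 1) * (a - 2) / 6 := by
  rw [cast_choose_eq_descPochhammer_div]
  simp [descPochhammer_succ_eval, factorial]

theorem cast_choose_four (a : ℕ) :
    (a.choose 4 : K) = a * (a - 1) * (a - 2) * (a - 3) / 24 := by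
  rw [cast_choose_eq_descPochhammer_div]
  simp [descPochhammer_succ_eval, factorial]

end Nat

theorem choose_four_sq_eq_alternating_hilbert_sum (n : ℕ) :
    ((n ^ 2 + 3).choose 4 : ℤ)
        - ((n + 1).choose 2 : ℤ) ^ 2 * ((n ^ 2 + 1).choose 2 : ℤ)
        + 4 * ((n + 1).choose 3 : ℤ) * ((n + 2).choose 3 : ℤ) * (n : ℤ) ^ 2
        - (6 * ((n + 1).choose 4 : ℤ) * ((n + 3).choose 4 : ℤ)
            + 9 * ((n + 2).choose 4 : ℤ) ^ 2)
      = (n.choose 4 : ℤ) ^ 2 := by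
  qify
  simp only [Nat.cast_choose_two, Nat.cast_choose_three, Nat.cast_choose_four]
  push_cast
  ring

theorem beta_three_four_closed_form (n : ℕ) :
    192 * (6 * ((n + 1).choose 4 : ℤ) * ((n + 3).choose 4 : ℤ)
        + 9 * ((n + 2).choose 4 : ℤ) ^ 2) =
      ((n : ℤ) - 1) * (n : ℤ) ^ 2 * ((n : ℤ) + 1) ^ 2 * ((n : ℤ) + 2) *
        (5 * (n : ℤ) ^ 2 + 5 * (n : ℤ) - 18) := by
  qify
  simp only [Nat.cast_choose_four]
  push_cast
  ring

theorem beta_three_four_general (n : ℕ) :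
    (∀ b : ℤ,
      ((n.choose 4 : ℤ)) ^ 2 =
          1 * ((n ^ 2 + 4 - 1).choose 4 : ℤ)
            - ((n + 1).choose 2 : ℤ) ^ 2 * ((n ^ 2 + 2 - 1).choose 2 : ℤ)
            + 4 * ((n + 1).choose 3 : ℤ) * ((n + 2).choose 3 : ℤ) *
                ((n ^ 2 + 1 - 1).choose 1 : ℤ)
            - b * ((n ^ 2 + 0 - 1).choose 0 : ℤ) ↔
        b = 6 * ((n + 1).choose 4 : ℤ) * ((n + 3).choose 4 : ℤ)
              + 9 * ((n + 2).choose 4 : ℤ) ^ 2) ∧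
    192 * (6 * ((n + 1).choose 4 : ℤ) * ((n + 3).choose 4 : ℤ)
        + 9 * ((n + 2).choose 4 : ℤ) ^ 2) =
      ((n : ℤ) - 1) * (n : ℤ) ^ 2 * ((n : ℤ) + 1) ^ 2 * ((n : ℤ) + 2) *
        (5 * (n : ℤ) ^ 2 + 5 * (n : ℤ) - 18) := by
  refine ⟨fun b => ?_, beta_three_four_closed_form n⟩
  have hilbert := choose_four_sq_eq_alternating_hilbert_sum n
  rw [show n ^ 2 + 4 - 1 = n ^ 2 + 3 by omega, show n ^ 2 + 2 - 1 = n ^ 2 + 1 by omega,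
    Nat.add_sub_cancel, Nat.choose_one_right, Nat.choose_zero_right]
  push_cast
  constructor <;> intro h <;> linarith

/-- With `H_S(d) = C(n²+d−1, d)` the Hilbert function of a polynomial ring in `n²`
variables, `β_{0,0} = 1`, `β_{1,2} = C(n+1,2)²`, `β_{2,3} = 4·C(n+1,3)·C(n+2,3)`, the
unique `β_{3,4}` solving the alternating Hilbert-function identity in degree `4` is
`6·C(n+1,4)·C(n+3,4) + 9·C(n+2,4)²`, which moreover equals
`(1/192)·(n−1)·n²·(n+1)²·(n+2)·(5n²+5n−18)`. -/
theorem beta_three_four (n : ℕ) (hn : 1 ≤ n) :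
    (∀ b : ℤ,
      ((n.choose 4 : ℤ)) ^ 2 =
          1 * ((n ^ 2 + 4 - 1).choose 4 : ℤ)
            - ((n + 1).choose 2 : ℤ) ^ 2 * ((n ^ 2 + 2 - 1).choose 2 : ℤ)
            + 4 * ((n + 1).choose 3 : ℤ) * ((n + 2).choose 3 : ℤ) *
                ((n ^ 2 + 1 - 1).choose 1 : ℤ)
            - b * ((n ^ 2 + 0 - 1).choose 0 : ℤ) ↔
        b = 6 * ((n + 1).choose 4 : ℤ) * ((n + 3).choose 4 : ℤ)
              + 9 * ((n + 2).choose 4 : ℤ) ^ 2) ∧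
    192 * (6 * ((n + 1).choose 4 : ℤ) * ((n + 3).choose 4 : ℤ)
        + 9 * ((n + 2).choose 4 : ℤ) ^ 2) =
      ((n : ℤ) - 1) * (n : ℤ) ^ 2 * ((n : ℤ) + 1) ^ 2 * ((n : ℤ) + 2) *
        (5 * (n : ℤ) ^ 2 + 5 * (n : ℤ) - 18) :=
  beta_three_four_general n
end
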